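/- arXiv:1609.00211 — 2 statements merged into one kernel-verified Lean document; each statement's English description precedes it below -/
import Mathlib

section
/- Let G = (V,E) be a connected finite simple graph with n = |V|, let k be the largest cardinality of an independent set of G, and let 𝒢 be the graph obtained from G by the subdivision-path-apex construction. Then the largest cardinality of a proper stalled subset of 𝒢 equals (2n+1)·|E| + k. -/
/-!
On each path `e^0 … e^{2n}` of `𝒢`, two consecutive filled vertices force the path all the way
up to `e^{2n}`, and a filled `e^{2n}` forces the whole path back down. So a stalled set either
fills a path completely or leaves at least `n + 1` of its vertices empty. If all paths are
filled, `e^0` (for `e = uv`) would force whenever exactly one of `u`, `v`, `ε` is empty. With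
`ε` empty this makes the filled vertices of `G` independent; with `ε` filled it makes the empty
vertices of `G` closed under adjacency, so by connectivity all of them are empty. In every case
at least `n + 1 - k` vertices are empty, and filling all paths together with a maximum
independent set attains this.
-/

/-- An empty vertex `v` is forced by the filled set `F` if some filled vertex `u ∈ F`
adjacent to `v` has `v` as its unique neighbor outside `F`. -/
def IsForced {W : Type*} (H : SimpleGraph W) (F : Set W) (v : W) : Prop :=
  v ∉ F ∧ ∃ u, u ∈ F ∧ H.Adj u v ∧ ∀ w, H.Adj u w → w ∉ F → w = v

/-- An empty vertex `v` is skew forced by `F` if some vertex `u` (filled or not)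
adjacent to `v` has `v` as its unique neighbor outside `F`. -/
def IsSkewForced {W : Type*} (H : SimpleGraph W) (F : Set W) (v : W) : Prop :=
  v ∉ F ∧ ∃ u, H.Adj u v ∧ ∀ w, H.Adj u w → w ∉ F → w = v

/-- `F` is stalled if no empty vertex is forced by `F`. -/
def Stalled {W : Type*} (H : SimpleGraph W) (F : Set W) : Prop :=
  ∀ v, ¬ IsForced H F v

/-- `F` is skew stalled if no empty vertex is skew forced by `F`. -/
def SkewStalled {W : Type*} (H : SimpleGraph W) (F : Set W) : Prop :=
  ∀ v, ¬ IsSkewForced H F v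

/-- A set of vertices is independent if its vertices are pairwise non-adjacent. -/
def IndepIn {W : Type*} (H : SimpleGraph W) (U : Set W) : Prop :=
  U.Pairwise fun a b => ¬ H.Adj a b

/-- Vertex set of the subdivision-path-apex construction: the vertices of `G`,
vertices `e^i` for each edge `e` and `0 ≤ i ≤ 2n`, and one apex vertex `ε`. -/
abbrev GVert {V : Type*} [Fintype V] (G : SimpleGraph V) : Type _ :=
  V ⊕ (G.edgeSet × Fin (2 * Fintype.card V + 1)) ⊕ Unit

/-- Generating relation: `v ~ e^0` when `v ∈ e`; `e^i ~ e^{i+1}`; `ε ~ e^0`. -/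
def gRel {V : Type*} [Fintype V] (G : SimpleGraph V) : GVert G → GVert G → Prop
  | Sum.inl v, Sum.inr (Sum.inl (e, i)) => i.val = 0 ∧ v ∈ (e : Sym2 V)
  | Sum.inr (Sum.inl (e, i)), Sum.inr (Sum.inl (e', j)) => e = e' ∧ i.val + 1 = j.val
  | Sum.inr (Sum.inr _), Sum.inr (Sum.inl (_, i)) => i.val = 0
  | _, _ => False

/-- The subdivision-path-apex construction `𝒢`. -/
def GG {V : Type*} [Fintype V] (G : SimpleGraph V) : SimpleGraph (GVert G) :=
  SimpleGraph.fromRel (gRel G)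

open SimpleGraph Sum Fin.NatCast

theorem Finset.card_le_of_forall_succ_notMem {s : Finset ℕ} {N : ℕ} (hs : s ⊆ Finset.range N)
    (hgap : ∀ i ∈ s, i + 1 ∉ s) : s.card ≤ (N + 1) / 2 := by
  calc s.card ≤ (Finset.range ((N + 1) / 2)).card := by
        refine Finset.card_le_card_of_injOn (· / 2) (fun i hi => ?_) fun a ha b hb hab => ?_
        · have := Finset.mem_range.1 (hs hi)
          simp only [Finset.coe_range, Set.mem_Iio]
          omega
        · simp only at hab
          rcases lt_trichotomy a b with h | h | h
          · exact absurd (show b = a + 1 by omega ▸ hb) (hgap a ha)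
          · exact h
          · exact absurd (show a = b + 1 by omega ▸ ha) (hgap b hb)
    _ = (N + 1) / 2 := Finset.card_range _

section Forcing

variable {W : Type*} {H : SimpleGraph W} {F : Set W}

theorem Stalled.mem_of_forall_adj_ne_mem (hF : Stalled H F) {u v : W} (hu : u ∈ F)
    (huv : H.Adj u v) (h : ∀ w, H.Adj u w → w ≠ v → w ∈ F) : v ∈ F := by
  by_contra hv
  exact hF v ⟨hv, u, hu, huv, fun w huw hw => by_contra fun hwv => hw (h w huw hwv)⟩

variable {p : ℕ → W} {N : ℕ}

structure IsPendantPath (H : SimpleGraph W) (p : ℕ → W) (N : ℕ) : Prop where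
  adj : ∀ i < N, H.Adj (p (i + 1)) (p i)
  eq_of_adj : ∀ i < N, ∀ w, H.Adj (p (i + 1)) w → w = p i ∨ (i + 2 ≤ N ∧ w = p (i + 2))
  injOn : Set.InjOn p (Set.Iic N)

theorem Stalled.path_mem_of_last_mem (hF : Stalled H F) (hp : IsPendantPath H p N)
    (hN : p N ∈ F) {i : ℕ} (hi : i ≤ N) : p i ∈ F := by
  suffices ∀ k ≤ N, ∀ j, k ≤ j → j ≤ N → p j ∈ F from this i hi i le_rfl hi
  intro k hk
  induction hk using Nat.decreasingInduction with
  | self => intro j hj hjN; rwa [le_antisymm hjN hj]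
  | of_succ k hk ih =>
    intro j hkj hjN
    rcases hkj.eq_or_lt with rfl | hkj
    · refine hF.mem_of_forall_adj_ne_mem (ih _ le_rfl hk) (hp.adj k hk) fun w hw hne => ?_
      obtain rfl | ⟨hk2, rfl⟩ := hp.eq_of_adj k hk w hw
      · exact absurd rfl hne
      · exact ih _ (by omega) hk2
    · exact ih j hkj hjN

theorem Stalled.path_last_mem (hF : Stalled H F) (hp : IsPendantPath H p N) {i : ℕ}
    (hi : i < N) (h₀ : p i ∈ F) (h₁ : p (i + 1) ∈ F) : p N ∈ F := by
  obtain ⟨N, rfl⟩ : ∃ M, N = M + 1 := ⟨N - 1, by omega⟩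
  suffices ∀ j, i ≤ j → j < N + 1 → p j ∈ F ∧ p (j + 1) ∈ F from
    (this N (by omega) N.lt_succ_self).2
  intro j hij
  induction j, hij using Nat.le_induction with
  | base => exact fun _ => ⟨h₀, h₁⟩
  | succ j _ ih =>
    intro hj
    obtain ⟨hj₀, hj₁⟩ := ih (by omega)
    refine ⟨hj₁, hF.mem_of_forall_adj_ne_mem hj₁ (hp.adj (j + 1) hj).symm fun w hw hne => ?_⟩
    obtain rfl | ⟨-, rfl⟩ := hp.eq_of_adj j (by omega) w hw
    · exact hj₀
    · exact absurd rfl hne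

theorem Stalled.div_two_add_one_le_ncard_compl (hF : Stalled H F) (hp : IsPendantPath H p N)
    (hfin : Fᶜ.Finite) {j : ℕ} (hj : j ≤ N) (hpj : p j ∉ F) : N / 2 + 1 ≤ Fᶜ.ncard := by
  classical
  have hlast : p N ∉ F := fun hN => hpj (hF.path_mem_of_last_mem hp hN hj)
  set s := (Finset.range (N + 1)).filter (p · ∈ F)
  set t := (Finset.range (N + 1)).filter (p · ∉ F)
  have hs : s.card ≤ (N + 1) / 2 := by
    refine Finset.card_le_of_forall_succ_notMem (fun i hi => ?_) fun i hi hi' => ?_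
    · obtain ⟨hiN, hpi⟩ := Finset.mem_filter.1 hi
      have : i ≠ N := by rintro rfl; exact hlast hpi
      simp only [Finset.mem_range] at hiN ⊢
      omega
    · obtain ⟨hiN, hpi⟩ := Finset.mem_filter.1 hi'
      exact hlast (hF.path_last_mem hp (by simp at hiN; omega) (Finset.mem_filter.1 hi).2 hpi)
  have hst : s.card + t.card = N + 1 := by
    rw [Finset.card_filter_add_card_filter_not, Finset.card_range]
  have ht : t.card ≤ Fᶜ.ncard := by
    rw [← Set.ncard_coe_finset]
    refine Set.ncard_le_ncard_of_injOn p (fun i hi => (Finset.mem_filter.1 hi).2)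
      (hp.injOn.mono fun i hi => ?_) hfin
    simpa [Nat.lt_succ_iff] using (Finset.mem_filter.1 hi).1
  omega

end Forcing

namespace GG

variable {V : Type*} [Fintype V] {G : SimpleGraph V}

@[simp] lemma not_adj_inl_inl {x y : V} : ¬ (GG G).Adj (inl x) (inl y) := by simp [GG, gRel]

@[simp] lemma not_adj_inl_apex {x : V} {u : Unit} : ¬ (GG G).Adj (inl x) (inr (inr u)) := by
  simp [GG, gRel]

@[simp] lemma adj_edge_inl {e : G.edgeSet} {i : Fin (2 * Fintype.card V + 1)} {x : V} :
    (GG G).Adj (inr (inl (e, i))) (inl x) ↔ i = 0 ∧ x ∈ (e : Sym2 V) := by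
  simp [GG, gRel]

@[simp] lemma adj_edge_apex {e : G.edgeSet} {i : Fin (2 * Fintype.card V + 1)} {u : Unit} :
    (GG G).Adj (inr (inl (e, i))) (inr (inr u)) ↔ i = 0 := by
  simp [GG, gRel]

lemma adj_edge_edge {e e' : G.edgeSet} {i j : Fin (2 * Fintype.card V + 1)} :
    (GG G).Adj (inr (inl (e, i))) (inr (inl (e', j))) ↔
      e = e' ∧ (i.val + 1 = j.val ∨ j.val + 1 = i.val) := by
  simp only [GG, fromRel_adj, gRel, ne_eq, inr.injEq, inl.injEq, Prod.mk.injEq]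
  constructor
  · rintro ⟨-, ⟨rfl, h⟩ | ⟨rfl, h⟩⟩ <;> simp [h]
  · rintro ⟨rfl, h⟩
    refine ⟨fun hij => ?_, by tauto⟩
    rw [hij.2] at h
    omega

/-- The vertex `e^i`, with `i` read modulo `2n + 1`. -/
def pathVert (e : G.edgeSet) (i : ℕ) : GVert G :=
  inr (inl (e, (i : Fin (2 * Fintype.card V + 1))))

@[simp] lemma pathVert_val (e : G.edgeSet) (i : Fin (2 * Fintype.card V + 1)) :
    pathVert e i.val = inr (inl (e, i)) := by
  simp [pathVert]

lemma isPendantPath_pathVert (e : G.edgeSet) :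
    IsPendantPath (GG G) (pathVert e) (2 * Fintype.card V) where
  adj i hi := by
    rw [pathVert, pathVert, adj_edge_edge, Fin.val_cast_of_lt (by omega),
      Fin.val_cast_of_lt (by omega)]
    exact ⟨rfl, .inr rfl⟩
  eq_of_adj i hi w hw := by
    rcases w with x | ⟨e', j⟩ | u
    · have h0 := (adj_edge_inl.1 hw).1
      rw [Fin.ext_iff, Fin.val_cast_of_lt (by omega), Fin.val_zero] at h0
      omega
    · simp only [pathVert, adj_edge_edge,
        Fin.val_cast_of_lt (show i + 1 < 2 * Fintype.card V + 1 by omega)] at hw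
      obtain ⟨rfl, hj | hj⟩ := hw
      · refine .inr ⟨by omega, ?_⟩
        rw [← pathVert_val, ← hj]
      · left
        rw [← pathVert_val, show j.val = i by omega]
    · have h0 := adj_edge_apex.1 hw
      rw [Fin.ext_iff, Fin.val_cast_of_lt (by omega), Fin.val_zero] at h0
      omega
  injOn i hi j hj hij := by
    simp only [pathVert, inr.injEq, inl.injEq, Prod.mk.injEq, true_and, Fin.ext_iff,
      Fin.val_cast_of_lt (Nat.lt_succ_of_le (Set.mem_Iic.1 hi)),
      Fin.val_cast_of_lt (Nat.lt_succ_of_le (Set.mem_Iic.1 hj))] at hij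
    exact hij

abbrev apex : GVert G := inr (inr ())

lemma card_gVert :
    Nat.card (GVert G) = Fintype.card V + (2 * Fintype.card V + 1) * G.edgeSet.ncard + 1 := by
  simp only [Nat.card_sum, Nat.card_prod, Nat.card_eq_fintype_card, Fintype.card_fin,
    Fintype.card_unit, Nat.card_coe_set_eq]
  ring

end GG

open GG

theorem IndepIn.exists_mem_notMem {V : Type*} {G : SimpleGraph V} {U : Set V} (hU : IndepIn G U)
    {e : Sym2 V} (he : e ∈ G.edgeSet) : ∃ x ∈ e, x ∉ U := by
  induction e using Sym2.ind with
  | _ a b =>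
    by_contra! h
    exact hU (h a (Sym2.mem_mk_left a b)) (h b (Sym2.mem_mk_right a b)) (G.ne_of_adj he) he

section Stalled

variable {V : Type*} [Fintype V] {G : SimpleGraph V} {S : Set (GVert G)}

theorem Stalled.inl_mem_iff_apex_mem (hS : Stalled (GG G) S)
    (hpath : ∀ e i, inr (inl (e, i)) ∈ S) {u v : V} (huv : G.Adj u v) (hu : inl u ∈ S) :
    inl v ∈ S ↔ apex ∈ S := by
  set e : G.edgeSet := ⟨s(u, v), huv⟩
  have hnbr : ∀ w, (GG G).Adj (inr (inl (e, 0))) w → w ∈ S ∨ w = inl v ∨ w = apex := by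
    rintro (x | ⟨e', j⟩ | ⟨⟩) hw
    · rcases Sym2.mem_iff.1 (adj_edge_inl.1 hw).2 with rfl | rfl
      exacts [.inl hu, .inr (.inl rfl)]
    · exact .inl (hpath e' j)
    · exact .inr (.inr rfl)
  constructor
  · intro hv
    refine hS.mem_of_forall_adj_ne_mem (hpath e 0) (adj_edge_apex.2 rfl) fun w hw hne => ?_
    obtain h | rfl | rfl := hnbr w hw
    exacts [h, hv, absurd rfl hne]
  · intro hε
    refine hS.mem_of_forall_adj_ne_mem (hpath e 0) (adj_edge_inl.2 ⟨rfl, Sym2.mem_mk_right u v⟩)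
      fun w hw hne => ?_
    obtain h | rfl | rfl := hnbr w hw
    exacts [h, absurd rfl hne, hε]

theorem Stalled.indepIn_of_apex_notMem (hS : Stalled (GG G) S)
    (hpath : ∀ e i, inr (inl (e, i)) ∈ S) (hε : apex ∉ S) : IndepIn G {x | inl x ∈ S} :=
  fun _ hu _ hv _ huv => hε ((hS.inl_mem_iff_apex_mem hpath huv hu).1 hv)

theorem Stalled.inl_notMem_of_apex_mem (hS : Stalled (GG G) S) (hne : S ≠ Set.univ)
    (hG : G.Preconnected) (hpath : ∀ e i, inr (inl (e, i)) ∈ S) (hε : apex ∈ S) (x : V) :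
    inl x ∉ S := by
  intro hx
  obtain ⟨y, hy⟩ : ∃ y : V, inl y ∉ S := by
    by_contra! h
    refine hne (Set.eq_univ_of_forall ?_)
    rintro (y | ⟨e, i⟩ | ⟨⟩)
    exacts [h y, hpath e i, hε]
  obtain ⟨d, -, hd, hd'⟩ := (hG x y).some.exists_boundary_dart {z | inl z ∈ S} hx hy
  exact hd' ((hS.inl_mem_iff_apex_mem hpath d.adj hd).2 hε)

theorem Stalled.card_add_one_le_ncard_compl_of_notMem (hS : Stalled (GG G) S) {e : G.edgeSet}
    {j : Fin (2 * Fintype.card V + 1)} (hj : inr (inl (e, j)) ∉ S) :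
    Fintype.card V + 1 ≤ Sᶜ.ncard := by
  have := hS.div_two_add_one_le_ncard_compl (isPendantPath_pathVert e) (Set.toFinite _)
    (Nat.lt_succ_iff.1 j.isLt) (by rwa [pathVert_val])
  omega

theorem Stalled.card_add_one_le_ncard_compl_add (hS : Stalled (GG G) S) (hne : S ≠ Set.univ)
    (hG : G.Connected) {k : ℕ} (hk : k ∈ upperBounds {m | ∃ U, IndepIn G U ∧ U.ncard = m}) :
    Fintype.card V + 1 ≤ Sᶜ.ncard + k := by
  by_cases hpath : ∀ e i, inr (inl (e, i)) ∈ S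
  swap
  · obtain ⟨e, j, hj⟩ := by simpa only [not_forall] using hpath
    have := hS.card_add_one_le_ncard_compl_of_notMem hj
    omega
  set W : Set V := {x | inl x ∈ S}
  have hWS : (inl '' Wᶜ : Set (GVert G)) ⊆ Sᶜ := Set.image_subset_iff.2 fun _ => id
  by_cases hε : apex ∈ S
  · have hk₁ : 1 ≤ k := by
      obtain ⟨x⟩ := hG.nonempty
      exact hk ⟨{x}, Set.pairwise_singleton _ _, Set.ncard_singleton x⟩
    have hWc : Wᶜ = Set.univ :=
      Set.eq_univ_of_forall (hS.inl_notMem_of_apex_mem hne hG.preconnected hpath hε)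
    have := Set.ncard_le_ncard hWS
    rw [Set.ncard_image_of_injective _ inl_injective, hWc, Set.ncard_univ,
      Nat.card_eq_fintype_card] at this
    omega
  · have hW : W.ncard + Wᶜ.ncard = Fintype.card V := by
      rw [Set.ncard_add_ncard_compl, Nat.card_eq_fintype_card]
    have hWk := hk ⟨W, hS.indepIn_of_apex_notMem hpath hε, rfl⟩
    have := Set.ncard_le_ncard (Set.insert_subset hε hWS)
    rw [Set.ncard_insert_of_notMem (by simp), Set.ncard_image_of_injective _ inl_injective] at this
    omega

theorem IndepIn.stalled_compl_insert_apex {U : Set V} (hU : IndepIn G U) :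
    Stalled (GG G) (insert apex (inl '' Uᶜ))ᶜ := by
  rintro v ⟨hv, u, hu, huv, huniq⟩
  rw [Set.notMem_compl_iff] at hv
  rcases u with y | ⟨e, i⟩ | ⟨⟩
  · rcases hv with rfl | ⟨x, -, rfl⟩ <;> simp at huv
  · have hi : i = 0 := by
      rcases hv with rfl | ⟨x, -, rfl⟩
      exacts [adj_edge_apex.1 huv, (adj_edge_inl.1 huv).1]
    obtain ⟨x, hxe, hxU⟩ := hU.exists_mem_notMem e.2
    have h₁ := huniq apex (adj_edge_apex.2 hi) (by simp)
    have h₂ := huniq (inl x) (adj_edge_inl.2 ⟨hi, hxe⟩) (by simpa using hxU)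
    exact inl_ne_inr (h₂.trans h₁.symm)
  · exact hu (Set.mem_insert _ _)

theorem ncard_compl_insert_apex (U : Set V) :
    (insert apex (inl '' Uᶜ) : Set (GVert G))ᶜ.ncard
      = (2 * Fintype.card V + 1) * G.edgeSet.ncard + U.ncard := by
  have hT := Set.ncard_add_ncard_compl (insert apex (inl '' Uᶜ) : Set (GVert G))
  have hU := Set.ncard_add_ncard_compl U
  rw [Set.ncard_insert_of_notMem (by simp), Set.ncard_image_of_injective _ inl_injective,
    card_gVert] at hT
  rw [Nat.card_eq_fintype_card] at hU
  omega

end Stalled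

/-- for connected `G` with independence number `k`, the largest
cardinality of a proper stalled subset of `𝒢` is `(2n+1)·|E| + k`. -/
theorem greatest_proper_stalled {V : Type*} [Fintype V] (G : SimpleGraph V)
    (hG : G.Connected) (k : ℕ)
    (hk : IsGreatest {m | ∃ U : Set V, IndepIn G U ∧ U.ncard = m} k) :
    IsGreatest {m | ∃ S : Set (GVert G), S ≠ Set.univ ∧ Stalled (GG G) S ∧ S.ncard = m}
      ((2 * Fintype.card V + 1) * G.edgeSet.ncard + k) := by
  obtain ⟨U, hU, rfl⟩ := hk.1
  refine ⟨⟨_, Set.compl_ne_univ.2 (Set.insert_nonempty _ _), hU.stalled_compl_insert_apex,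
    ncard_compl_insert_apex U⟩, ?_⟩
  rintro _ ⟨S, hne, hS, rfl⟩
  have h₁ := hS.card_add_one_le_ncard_compl_add hne hG hk.2
  have h₂ := Set.ncard_add_ncard_compl S
  rw [card_gVert] at h₂
  omega
end

section
/- Let G = (V,E) be a connected finite simple graph with n = |V|, let k be the largest cardinality of an independent set of G, and let 𝒢 be the graph obtained from G by the subdivision-path-apex construction. Then the largest cardinality of a proper skew stalled subset of 𝒢 equals (2n+1)·|E| + k. -/
section helpers
variable {V : Type*} [Fintype V] {G : SimpleGraph V}

/-- path vertex -/
abbrev pv (e : G.edgeSet) (i : Fin (2 * Fintype.card V + 1)) : GVert G :=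
  Sum.inr (Sum.inl (e, i))

/-- apex -/
abbrev eps : GVert G := Sum.inr (Sum.inr ())

lemma skewStalled_iff (F : Set (GVert G)) :
    SkewStalled (GG G) F ↔ ∀ v ∉ F, ∀ u, (GG G).Adj u v →
      ∃ w, (GG G).Adj u w ∧ w ∉ F ∧ w ≠ v := by
  unfold SkewStalled IsSkewForced
  push_neg
  tauto

lemma gg_adj (x y : GVert G) : (GG G).Adj x y ↔ x ≠ y ∧ (gRel G x y ∨ gRel G y x) :=
  SimpleGraph.fromRel_adj _ _ _

lemma adj_inl {u : GVert G} {a : V} (h : (GG G).Adj u (Sum.inl a)) :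
    ∃ e i, u = pv e i ∧ i.val = 0 ∧ a ∈ (e : Sym2 V) := by
  rw [gg_adj] at h
  obtain ⟨-, h | h⟩ := h <;>
  · rcases u with b | ⟨⟨e, i⟩⟩ | ⟨⟨⟩⟩ <;> simp only [gRel] at h <;> tauto

lemma adj_eps {u : GVert G} (h : (GG G).Adj u eps) :
    ∃ e i, u = pv e i ∧ i.val = 0 := by
  rw [gg_adj] at h
  obtain ⟨-, h | h⟩ := h <;>
  · rcases u with b | ⟨⟨e, i⟩⟩ | ⟨⟨⟩⟩ <;> simp only [gRel] at h <;> tauto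

lemma adj_pv {e : G.edgeSet} {i : Fin (2 * Fintype.card V + 1)} {w : GVert G}
    (h : (GG G).Adj (pv e i) w) :
    (∃ a, w = Sum.inl a ∧ i.val = 0 ∧ a ∈ (e : Sym2 V)) ∨
    (w = eps ∧ i.val = 0) ∨
    (∃ j, w = pv e j ∧ (i.val + 1 = j.val ∨ j.val + 1 = i.val)) := by
  rw [gg_adj] at h
  obtain ⟨hne, h | h⟩ := h
  · rcases w with b | ⟨⟨e', j⟩⟩ | ⟨⟨⟩⟩ <;> simp only [gRel] at h
    obtain ⟨rfl, hj⟩ := h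
    exact Or.inr (Or.inr ⟨j, rfl, Or.inl hj⟩)
  · rcases w with b | ⟨⟨e', j⟩⟩ | ⟨⟨⟩⟩ <;> simp only [gRel] at h
    · exact Or.inl ⟨b, rfl, h.1, h.2⟩
    · obtain ⟨rfl, hj⟩ := h
      exact Or.inr (Or.inr ⟨j, rfl, Or.inr hj⟩)
    · exact Or.inr (Or.inl ⟨rfl, h⟩)

lemma adj_eps_pv0 {e : G.edgeSet} {i : Fin (2 * Fintype.card V + 1)} (hi : i.val = 0) :
    (GG G).Adj eps (pv e i) := by
  rw [gg_adj]
  exact ⟨by simp, Or.inl hi⟩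

lemma adj_inl_pv0 {e : G.edgeSet} {i : Fin (2 * Fintype.card V + 1)} {a : V}
    (hi : i.val = 0) (ha : a ∈ (e : Sym2 V)) :
    (GG G).Adj (Sum.inl a) (pv e i) := by
  rw [gg_adj]
  exact ⟨by simp, Or.inl ⟨hi, ha⟩⟩

lemma adj_pv_succ {e : G.edgeSet} {i j : Fin (2 * Fintype.card V + 1)}
    (hij : i.val + 1 = j.val) : (GG G).Adj (pv e i) (pv e j) := by
  rw [gg_adj]
  refine ⟨?_, Or.inl ⟨rfl, hij⟩⟩
  simp only [ne_eq, Sum.inr.injEq, Sum.inl.injEq, Prod.mk.injEq]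
  rintro ⟨-, rfl⟩
  omega

set_option linter.unusedSectionVars false in
lemma edge_endpoints (e : G.edgeSet) :
    ∃ a b : V, G.Adj a b ∧ (e : Sym2 V) = s(a, b) := by
  rcases e with ⟨z, hz⟩
  induction z using Sym2.ind with
  | _ a b => exact ⟨a, b, G.mem_edgeSet.mp hz, rfl⟩

end helpers

section memb
variable {V : Type*} [Fintype V] {G : SimpleGraph V}

set_option linter.unusedSectionVars false in
lemma exists_good (U : Set V) (hU : IndepIn G U) :
    ∃ F : Set (GVert G), F ≠ Set.univ ∧ SkewStalled (GG G) F ∧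
      F.ncard = (2 * Fintype.card V + 1) * G.edgeSet.ncard + U.ncard := by
  classical
  set F : Set (GVert G) :=
    Sum.inl '' U ∪ Set.range (fun p : G.edgeSet × Fin (2 * Fintype.card V + 1) =>
      Sum.inr (Sum.inl p)) with hF
  have heps : (eps : GVert G) ∉ F := by simp [hF, eps]
  have hinl : ∀ a : V, Sum.inl a ∈ F ↔ a ∈ U := by intro a; simp [hF]
  have hpv : ∀ (e : G.edgeSet) i, pv e i ∈ F := fun e i => Or.inr ⟨(e, i), rfl⟩
  refine ⟨F, ?_, ?_, ?_⟩
  · intro h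
    rw [h] at heps
    exact heps (Set.mem_univ _)
  · rw [skewStalled_iff]
    intro v hv u hadj
    rcases v with a | ⟨⟨e, i⟩⟩ | ⟨⟨⟩⟩
    · have haU : a ∉ U := fun h => hv ((hinl a).2 h)
      obtain ⟨e, i, rfl, hi0, hae⟩ := adj_inl hadj
      exact ⟨eps, ((adj_eps_pv0 hi0)).symm, heps, by simp [eps]⟩
    · exact absurd (hpv e i) hv
    · obtain ⟨e, i, rfl, hi0⟩ := adj_eps hadj
      obtain ⟨a, b, hab, hs⟩ := edge_endpoints e
      have hor : a ∉ U ∨ b ∉ U := by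
        by_contra h
        push_neg at h
        exact (hU h.1 h.2 (G.ne_of_adj hab)) hab
      obtain hc | hc := hor
      · exact ⟨Sum.inl a, (adj_inl_pv0 hi0 (by simp [hs])).symm,
          fun h => hc ((hinl a).1 h), by simp [eps]⟩
      · exact ⟨Sum.inl b, (adj_inl_pv0 hi0 (by simp [hs])).symm,
          fun h => hc ((hinl b).1 h), by simp [eps]⟩
  · have hdisj : Disjoint (Sum.inl '' U : Set (GVert G))
        (Set.range (fun p : G.edgeSet × Fin (2 * Fintype.card V + 1) =>
          (Sum.inr (Sum.inl p) : GVert G))) := by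
      rw [Set.disjoint_left]
      rintro x ⟨a, ha, rfl⟩ ⟨p, hp⟩
      simp at hp
    have hinj : Function.Injective
        (fun p : G.edgeSet × Fin (2 * Fintype.card V + 1) =>
          (Sum.inr (Sum.inl p) : GVert G)) := by
      intro p q h
      simpa using h
    rw [hF, Set.ncard_union_eq hdisj (Set.toFinite _) (Set.toFinite _),
      Set.ncard_image_of_injective _ Sum.inl_injective,
      ← Set.image_univ, Set.ncard_image_of_injective _ hinj, Set.ncard_univ]
    rw [Nat.card_prod, Nat.card_eq_fintype_card (α := Fin _), Fintype.card_fin,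
      Nat.card_coe_set_eq]
    ring

end memb

section upper
variable {V : Type*} [Fintype V] {G : SimpleGraph V} {C : Set (GVert G)}

set_option linter.unusedSectionVars false

lemma step_up
    (hP : ∀ u v, (GG G).Adj u v → v ∈ C → ∃ w, (GG G).Adj u w ∧ w ∈ C ∧ w ≠ v)
    (e : G.edgeSet) (a b : ℕ) (hb : b ≤ 2 * Fintype.card V) (hab : a + 2 = b)
    (h : pv e ⟨a, by omega⟩ ∈ C) : pv e ⟨b, by omega⟩ ∈ C := by
  obtain ⟨w, hw, hwC, hwne⟩ := hP (pv e ⟨a + 1, by omega⟩) (pv e ⟨a, by omega⟩)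
    ((adj_pv_succ (by simp)).symm) h
  rcases adj_pv hw with ⟨c, rfl, h0, -⟩ | ⟨rfl, h0⟩ | ⟨j, rfl, hj | hj⟩
  · exact absurd (show a + 1 = 0 from h0) (by omega)
  · exact absurd (show a + 1 = 0 from h0) (by omega)
  · have hj' : a + 1 + 1 = j.val := hj
    have hje : j = (⟨b, by omega⟩ : Fin (2 * Fintype.card V + 1)) :=
      Fin.ext (show j.val = b by omega)
    rwa [hje] at hwC
  · have hj' : j.val + 1 = a + 1 := hj
    have hje : j = (⟨a, by omega⟩ : Fin (2 * Fintype.card V + 1)) :=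
      Fin.ext (show j.val = a by omega)
    exact absurd (by rw [hje]) hwne

lemma step_down
    (hP : ∀ u v, (GG G).Adj u v → v ∈ C → ∃ w, (GG G).Adj u w ∧ w ∈ C ∧ w ≠ v)
    (e : G.edgeSet) (a b : ℕ) (hb : b ≤ 2 * Fintype.card V) (hab : a + 2 = b)
    (h : pv e ⟨b, by omega⟩ ∈ C) : pv e ⟨a, by omega⟩ ∈ C := by
  obtain ⟨w, hw, hwC, hwne⟩ := hP (pv e ⟨a + 1, by omega⟩) (pv e ⟨b, by omega⟩)
    (adj_pv_succ (show a + 1 + 1 = b by omega)) h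
  rcases adj_pv hw with ⟨c, rfl, h0, -⟩ | ⟨rfl, h0⟩ | ⟨j, rfl, hj | hj⟩
  · exact absurd (show a + 1 = 0 from h0) (by omega)
  · exact absurd (show a + 1 = 0 from h0) (by omega)
  · have hj' : a + 1 + 1 = j.val := hj
    have hje : j = (⟨b, by omega⟩ : Fin (2 * Fintype.card V + 1)) :=
      Fin.ext (show j.val = b by omega)
    exact absurd (by rw [hje]) hwne
  · have hj' : j.val + 1 = a + 1 := hj
    have hje : j = (⟨a, by omega⟩ : Fin (2 * Fintype.card V + 1)) :=
      Fin.ext (show j.val = a by omega)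
    rwa [hje] at hwC

lemma top_false
    (hP : ∀ u v, (GG G).Adj u v → v ∈ C → ∃ w, (GG G).Adj u w ∧ w ∈ C ∧ w ≠ v)
    (e : G.edgeSet) (a : ℕ) (ha : a + 1 = 2 * Fintype.card V)
    (h : pv e ⟨a, by omega⟩ ∈ C) : False := by
  obtain ⟨w, hw, hwC, hwne⟩ := hP (pv e ⟨a + 1, by omega⟩) (pv e ⟨a, by omega⟩)
    ((adj_pv_succ (by simp)).symm) h
  rcases adj_pv hw with ⟨c, rfl, h0, -⟩ | ⟨rfl, h0⟩ | ⟨j, rfl, hj | hj⟩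
  · exact absurd (show a + 1 = 0 from h0) (by omega)
  · exact absurd (show a + 1 = 0 from h0) (by omega)
  · have hj' : a + 1 + 1 = j.val := hj
    have := j.isLt
    omega
  · have hj' : j.val + 1 = a + 1 := hj
    have hje : j = (⟨a, by omega⟩ : Fin (2 * Fintype.card V + 1)) :=
      Fin.ext (show j.val = a by omega)
    exact hwne (by rw [hje])

lemma even_of_mem
    (hP : ∀ u v, (GG G).Adj u v → v ∈ C → ∃ w, (GG G).Adj u w ∧ w ∈ C ∧ w ≠ v)
    (e : G.edgeSet) :
    ∀ d a (hd : a + d = 2 * Fintype.card V), pv e ⟨a, by omega⟩ ∈ C → a % 2 = 0 := by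
  intro d
  induction d using Nat.strong_induction_on with
  | _ d ih =>
    intro a ha hmem
    match d, ha with
    | 0, ha => omega
    | 1, ha => exact (top_false hP e a (by omega) hmem).elim
    | (d + 2), ha =>
      have h2 := step_up hP e a (a + 2) (by omega) rfl hmem
      have := ih d (by omega) (a + 2) (by omega) h2
      omega

lemma chain_up
    (hP : ∀ u v, (GG G).Adj u v → v ∈ C → ∃ w, (GG G).Adj u w ∧ w ∈ C ∧ w ≠ v)
    (e : G.edgeSet) :
    ∀ d a b (hb : b ≤ 2 * Fintype.card V) (hab : a + 2 * d = b),
      pv e ⟨a, by omega⟩ ∈ C → pv e ⟨b, by omega⟩ ∈ C := by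
  intro d
  induction d with
  | zero =>
    intro a b hb hab h
    have : a = b := by omega
    subst this
    exact h
  | succ d ih =>
    intro a b hb hab h
    exact ih (a + 2) b hb (by omega) (step_up hP e a (a + 2) (by omega) rfl h)

lemma chain_down
    (hP : ∀ u v, (GG G).Adj u v → v ∈ C → ∃ w, (GG G).Adj u w ∧ w ∈ C ∧ w ≠ v)
    (e : G.edgeSet) :
    ∀ d a b (hb : b ≤ 2 * Fintype.card V) (hab : a + 2 * d = b),
      pv e ⟨b, by omega⟩ ∈ C → pv e ⟨a, by omega⟩ ∈ C := by
  intro d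
  induction d with
  | zero =>
    intro a b hb hab h
    have : a = b := by omega
    subst this
    exact h
  | succ d ih =>
    intro a b hb hab h
    exact step_down hP e a (a + 2) (by omega) rfl (ih (a + 2) b hb (by omega) h)

lemma caseA_bound
    (hP : ∀ u v, (GG G).Adj u v → v ∈ C → ∃ w, (GG G).Adj u w ∧ w ∈ C ∧ w ≠ v)
    (e : G.edgeSet) (i : Fin (2 * Fintype.card V + 1)) (hmem : pv e i ∈ C) :
    Fintype.card V + 1 ≤ C.ncard := by
  classical
  obtain ⟨iv, hiv⟩ := i
  have hev : iv % 2 = 0 :=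
    even_of_mem hP e (2 * Fintype.card V - iv) iv (by omega) hmem
  have hall : ∀ j : ℕ, ∀ hj : j ≤ Fintype.card V, pv e ⟨2 * j, by omega⟩ ∈ C := by
    intro j hj
    rcases le_or_gt (2 * j) iv with hle | hlt
    · exact chain_down hP e ((iv - 2 * j) / 2) (2 * j) iv (by omega) (by omega) hmem
    · exact chain_up hP e ((2 * j - iv) / 2) iv (2 * j) (by omega) (by omega) hmem
  set f : Fin (Fintype.card V + 1) → GVert G :=
    fun j => pv e ⟨2 * j.val, by omega⟩ with hf
  have hfinj : Function.Injective f := by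
    intro p q h
    simp only [hf, pv, Sum.inr.injEq, Sum.inl.injEq, Prod.mk.injEq, Fin.mk.injEq] at h
    exact Fin.ext (by omega)
  have hsub : Set.range f ⊆ C := by
    rintro x ⟨j, rfl⟩
    exact hall j.val (by omega)
  have h1 : (Set.range f).ncard = Fintype.card V + 1 := by
    rw [← Set.image_univ, Set.ncard_image_of_injective _ hfinj, Set.ncard_univ,
      Nat.card_eq_fintype_card, Fintype.card_fin]
  rw [← h1]
  exact Set.ncard_le_ncard hsub (Set.toFinite _)

end upper

section final
variable {V : Type*} [Fintype V] {G : SimpleGraph V} {C : Set (GVert G)}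

set_option linter.unusedSectionVars false

lemma caseB_bound
    (hP : ∀ u v, (GG G).Adj u v → v ∈ C → ∃ w, (GG G).Adj u w ∧ w ∈ C ∧ w ≠ v)
    (hpath : ∀ (e : G.edgeSet) i, pv e i ∉ C) (heps : (eps : GVert G) ∈ C)
    (k : ℕ) (hk2 : ∀ U : Set V, IndepIn G U → U.ncard ≤ k) :
    Fintype.card V + 1 ≤ C.ncard + k := by
  classical
  set A : Set V := {a | Sum.inl a ∈ C} with hA
  have hind : IndepIn G Aᶜ := by
    intro a ha b hb hne hadj
    set e : G.edgeSet := ⟨s(a, b), hadj⟩ with he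
    obtain ⟨w, hw, hwC, hwne⟩ := hP (pv e ⟨0, by omega⟩) eps ((adj_eps_pv0 rfl).symm) heps
    rcases adj_pv hw with ⟨c, rfl, h0, hc⟩ | ⟨rfl, h0⟩ | ⟨j, rfl, hj⟩
    · have : c = a ∨ c = b := by simpa [he] using hc
      rcases this with rfl | rfl
      · exact ha hwC
      · exact hb hwC
    · exact hwne rfl
    · exact hpath e j hwC
  have h1 := Set.ncard_add_ncard_compl A
  have h2 : Aᶜ.ncard ≤ k := hk2 Aᶜ hind
  have h3 : (Sum.inl '' A ∪ {eps} : Set (GVert G)) ⊆ C := by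
    rintro x (⟨a, ha, rfl⟩ | rfl)
    · exact ha
    · exact heps
  have h4 : (Sum.inl '' A ∪ {eps} : Set (GVert G)).ncard = A.ncard + 1 := by
    rw [Set.ncard_union_eq
        (by rw [Set.disjoint_left]; rintro x ⟨a, ha, rfl⟩ h; simp [eps] at h)
        (Set.toFinite _) (Set.toFinite _),
      Set.ncard_image_of_injective _ Sum.inl_injective, Set.ncard_singleton]
  have h5 := Set.ncard_le_ncard h3 (Set.toFinite C)
  rw [Nat.card_eq_fintype_card] at h1
  omega

lemma caseC_bound (hG : G.Connected)
    (hP : ∀ u v, (GG G).Adj u v → v ∈ C → ∃ w, (GG G).Adj u w ∧ w ∈ C ∧ w ≠ v)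
    (hpath : ∀ (e : G.edgeSet) i, pv e i ∉ C) (heps : (eps : GVert G) ∉ C)
    (hCne : C.Nonempty) :
    Fintype.card V ≤ C.ncard := by
  classical
  obtain ⟨x, hx⟩ := hCne
  rcases x with a0 | ⟨⟨e, i⟩⟩ | ⟨⟨⟩⟩
  · have hstep : ∀ a b, G.Adj a b → Sum.inl a ∈ C → Sum.inl b ∈ C := by
      intro a b hadj haC
      set e : G.edgeSet := ⟨s(a, b), hadj⟩ with he
      have hmem : a ∈ (e : Sym2 V) := by simp [he]
      obtain ⟨w, hw, hwC, hwne⟩ := hP (pv e ⟨0, by omega⟩) (Sum.inl a)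
        ((adj_inl_pv0 rfl hmem).symm) haC
      rcases adj_pv hw with ⟨c, rfl, h0, hc⟩ | ⟨rfl, h0⟩ | ⟨j, rfl, hj⟩
      · have : c = a ∨ c = b := by simpa [he] using hc
        rcases this with rfl | rfl
        · exact absurd rfl hwne
        · exact hwC
      · exact absurd hwC heps
      · exact (hpath e j hwC).elim
    have key : ∀ {x y : V} (p : G.Walk x y), Sum.inl x ∈ C → Sum.inl y ∈ C := by
      intro x y p
      induction p with
      | nil => exact id
      | cons h q ih => exact fun hx => ih (hstep _ _ h hx)
    have hall : ∀ b, Sum.inl b ∈ C := by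
      intro b
      obtain ⟨p⟩ := hG.preconnected a0 b
      exact key p hx
    have h3 : (Set.range (Sum.inl : V → GVert G)) ⊆ C := by
      rintro x ⟨b, rfl⟩
      exact hall b
    have h4 : (Set.range (Sum.inl : V → GVert G)).ncard = Fintype.card V := by
      rw [← Set.image_univ, Set.ncard_image_of_injective _ Sum.inl_injective,
        Set.ncard_univ, Nat.card_eq_fintype_card]
    have h5 := Set.ncard_le_ncard h3 (Set.toFinite C)
    omega
  · exact (hpath e i hx).elim
  · exact (heps hx).elim

lemma card_GVert :
    Nat.card (GVert G) =
      Fintype.card V + ((2 * Fintype.card V + 1) * G.edgeSet.ncard + 1) := by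
  classical
  rw [Nat.card_sum, Nat.card_sum, Nat.card_prod, Nat.card_coe_set_eq]
  simp only [Nat.card_eq_fintype_card, Fintype.card_fin, Fintype.card_unit]
  ring

end final


/-- for connected `G` with independence number `k`, the largest
cardinality of a proper skew stalled subset of `𝒢` is `(2n+1)·|E| + k`. -/
theorem greatest_proper_skewStalled {V : Type*} [Fintype V] (G : SimpleGraph V)
    (hG : G.Connected) (k : ℕ)
    (hk : IsGreatest {m | ∃ U : Set V, IndepIn G U ∧ U.ncard = m} k) :
    IsGreatest {m | ∃ S : Set (GVert G), S ≠ Set.univ ∧ SkewStalled (GG G) S ∧ S.ncard = m}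
      ((2 * Fintype.card V + 1) * G.edgeSet.ncard + k) := by
  classical
  constructor
  · obtain ⟨U, hU, hUk⟩ := hk.1
    obtain ⟨F, h1, h2, h3⟩ := exists_good U hU
    exact ⟨F, h1, h2, by rw [h3, hUk]⟩
  · rintro m ⟨S, hSne, hSst, rfl⟩
    have hk2 : ∀ U : Set V, IndepIn G U → U.ncard ≤ k := fun U hU => hk.2 ⟨U, hU, rfl⟩
    set C := Sᶜ with hC
    have hCne : C.Nonempty := by rw [hC]; exact Set.nonempty_compl.2 hSne
    have hP : ∀ u v, (GG G).Adj u v → v ∈ C → ∃ w, (GG G).Adj u w ∧ w ∈ C ∧ w ≠ v := by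
      rw [skewStalled_iff] at hSst
      intro u v hadj hv
      exact hSst v hv u hadj
    have hkey : Fintype.card V + 1 ≤ C.ncard + k := by
      by_cases hpath : ∃ e : G.edgeSet, ∃ i, pv e i ∈ C
      · obtain ⟨e, i, hmem⟩ := hpath
        have := caseA_bound hP e i hmem
        omega
      · push_neg at hpath
        by_cases heps : (eps : GVert G) ∈ C
        · exact caseB_bound hP hpath heps k hk2
        · have hk1 : 1 ≤ k := by
            obtain ⟨a⟩ := hG.nonempty
            have hs : IndepIn G {a} := Set.pairwise_singleton _ _
            exact hk.2 ⟨{a}, hs, Set.ncard_singleton a⟩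
          have := caseC_bound hG hP hpath heps hCne
          omega
    have hsum := Set.ncard_add_ncard_compl S
    rw [card_GVert, ← hC] at hsum
    omega
end
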